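/- For a pure bipartite state |ψ⟩ = ∑_i q_i |ψ_i⟩_A|ψ_i⟩_B with Schmidt coefficients q_i ≥ 0, ∑_i q_i² = 1, the maximal fidelity with maximally entangled states is (1/d)(∑_i q_i)²; equivalently, the entanglement deficiency of ρ = |ψ⟩⟨ψ| is D_g^E(ρ) = 1 − (1/d)(∑_i q_i)². -/

import Mathlib

/-!
Expanding both vectors, `⟨φ_ab|ψ⟩ = d^(-1/2) ∑ⱼ qⱼ ∑ᵢ ⟨aᵢ|eⱼ⟩⟨bᵢ|fⱼ⟩`. An orthonormal family of `d`
vectors in `ℂ^d` has a unitary coordinate matrix, so Parseval and AM–GM bound each inner sum by `1`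
in modulus; for `a = e`, `b = f` every inner sum equals `1`. Hence the supremum is attained at the
Schmidt bases and equals `(∑ⱼ qⱼ)² / d`.
-/

open Matrix BigOperators ComplexOrder Kronecker

/-- A density operator: positive semidefinite with unit trace. -/
def IsDensity {n : Type*} [Fintype n] [DecidableEq n]
    (ρ : Matrix n n ℂ) : Prop :=
  ρ.PosSemidef ∧ ρ.trace = 1

/-- An orthonormal family of vectors in `ℂ^d`. -/
def IsONB {d : ℕ} (a : Fin d → (Fin d → ℂ)) : Prop :=
  ∀ i j, star (a i) ⬝ᵥ a j = if i = j then 1 else 0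

/-- The maximally entangled state vector `(1/√d) ∑ i |a i⟩|b i⟩`. -/
noncomputable def mePhi (d : ℕ) (a b : Fin d → (Fin d → ℂ)) :
    Fin d × Fin d → ℂ :=
  fun x => (((Real.sqrt d)⁻¹ : ℝ) : ℂ) * ∑ i, a i x.1 * b i x.2

/-- Maximal fidelity of `ρ` with maximally entangled states. -/
noncomputable def maxEntFid {d : ℕ}
    (ρ : Matrix (Fin d × Fin d) (Fin d × Fin d) ℂ) : ℝ :=
  sSup {r : ℝ | ∃ a b : Fin d → (Fin d → ℂ), IsONB a ∧ IsONB b ∧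
    r = (star (mePhi d a b) ⬝ᵥ ρ.mulVec (mePhi d a b)).re}

section DotProduct

variable {n : Type*} [Fintype n]

lemma re_star_dotProduct_self (w : n → ℂ) : (star w ⬝ᵥ w).re = ∑ i, ‖w i‖ ^ 2 := by
  simp [dotProduct, Complex.re_sum, Complex.sq_norm, Complex.normSq_apply]

lemma star_mulVec_dotProduct_mulVec_of_mem_unitaryGroup {R : Type*} [CommRing R] [StarRing R]
    [DecidableEq n] {U : Matrix n n R} (hU : U ∈ unitaryGroup n R) (v : n → R) :
    star (U *ᵥ v) ⬝ᵥ (U *ᵥ v) = star v ⬝ᵥ v := by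
  rw [star_mulVec, dotProduct_mulVec, vecMul_vecMul, ← star_eq_conjTranspose,
    mem_unitaryGroup_iff'.mp hU, vecMul_one]

lemma norm_sum_mul_le_one {x y : n → ℂ} (hx : ∑ i, ‖x i‖ ^ 2 = 1) (hy : ∑ i, ‖y i‖ ^ 2 = 1) :
    ‖∑ i, x i * y i‖ ≤ 1 :=
  calc ‖∑ i, x i * y i‖ ≤ ∑ i, ‖x i‖ * ‖y i‖ := by
        simpa only [norm_mul] using norm_sum_le Finset.univ fun i => x i * y i
    _ ≤ ∑ i, (‖x i‖ ^ 2 + ‖y i‖ ^ 2) / 2 := by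
        gcongr with i
        nlinarith [two_mul_le_add_sq ‖x i‖ ‖y i‖]
    _ = 1 := by rw [← Finset.sum_div, Finset.sum_add_distrib, hx, hy]; norm_num

end DotProduct

namespace IsONB

variable {d : ℕ} {a b e f : Fin d → Fin d → ℂ}

def coordMatrix (a : Fin d → Fin d → ℂ) : Matrix (Fin d) (Fin d) ℂ := Matrix.of fun i => star (a i)

lemma coordMatrix_mulVec (a : Fin d → Fin d → ℂ) (v : Fin d → ℂ) :
    coordMatrix a *ᵥ v = fun i => star (a i) ⬝ᵥ v := rfl

lemma coordMatrix_mem_unitaryGroup (ha : IsONB a) : coordMatrix a ∈ unitaryGroup (Fin d) ℂ := by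
  rw [mem_unitaryGroup_iff]
  ext i j
  simpa [coordMatrix, mul_apply, one_apply, dotProduct] using ha i j

lemma sum_norm_dotProduct_sq (ha : IsONB a) (v : Fin d → ℂ) :
    ∑ i, ‖star (a i) ⬝ᵥ v‖ ^ 2 = ∑ x, ‖v x‖ ^ 2 :=
  calc ∑ i, ‖star (a i) ⬝ᵥ v‖ ^ 2 = (star (coordMatrix a *ᵥ v) ⬝ᵥ (coordMatrix a *ᵥ v)).re :=
        (re_star_dotProduct_self _).symm
    _ = ∑ x, ‖v x‖ ^ 2 := by
      rw [star_mulVec_dotProduct_mulVec_of_mem_unitaryGroup ha.coordMatrix_mem_unitaryGroup,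
        re_star_dotProduct_self]

lemma sum_norm_sq (he : IsONB e) (j : Fin d) : ∑ x, ‖e j x‖ ^ 2 = 1 := by
  rw [← re_star_dotProduct_self, he j j, if_pos rfl, Complex.one_re]

lemma norm_sum_dotProduct_mul_dotProduct_le_one (ha : IsONB a) (hb : IsONB b) {u v : Fin d → ℂ}
    (hu : ∑ x, ‖u x‖ ^ 2 = 1) (hv : ∑ x, ‖v x‖ ^ 2 = 1) :
    ‖∑ i, (star (a i) ⬝ᵥ u) * (star (b i) ⬝ᵥ v)‖ ≤ 1 :=
  norm_sum_mul_le_one ((ha.sum_norm_dotProduct_sq u).trans hu)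
    ((hb.sum_norm_dotProduct_sq v).trans hv)

lemma sum_dotProduct_mul_dotProduct_self (he : IsONB e) (hf : IsONB f) (j : Fin d) :
    ∑ i, (star (e i) ⬝ᵥ e j) * (star (f i) ⬝ᵥ f j) = 1 := by
  simp [he _ j, hf _ j]

end IsONB

lemma dotProduct_tensor {R n m : Type*} [CommSemiring R] [Fintype n] [Fintype m]
    (u u' : n → R) (v v' : m → R) :
    (fun x : n × m => u x.1 * v x.2) ⬝ᵥ (fun x => u' x.1 * v' x.2) = (u ⬝ᵥ u') * (v ⬝ᵥ v') := by
  simp only [dotProduct, Fintype.sum_prod_type, Finset.sum_mul_sum]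
  exact Finset.sum_congr rfl fun _ _ => Finset.sum_congr rfl fun _ _ => by ring

lemma star_mePhi_dotProduct {d : ℕ} (a b e f : Fin d → Fin d → ℂ) (q : Fin d → ℝ) :
    star (mePhi d a b) ⬝ᵥ (fun x => ∑ j, (q j : ℂ) * e j x.1 * f j x.2) =
      (((Real.sqrt d)⁻¹ : ℝ) : ℂ) *
        ∑ j, (q j : ℂ) * ∑ i, (star (a i) ⬝ᵥ e j) * (star (b i) ⬝ᵥ f j) := by
  have hφ : star (mePhi d a b) =
      (((Real.sqrt d)⁻¹ : ℝ) : ℂ) •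
        ∑ i, fun x : Fin d × Fin d => star (a i) x.1 * star (b i) x.2 := by
    ext x; simp [mePhi, Finset.sum_apply]
  have hψ : (fun x : Fin d × Fin d => ∑ j, (q j : ℂ) * e j x.1 * f j x.2) =
      ∑ j, (q j : ℂ) • fun x : Fin d × Fin d => e j x.1 * f j x.2 := by
    ext x; simp [Finset.sum_apply, mul_assoc]
  rw [hφ, hψ]
  simp only [smul_dotProduct, sum_dotProduct, dotProduct_sum, dotProduct_smul, dotProduct_tensor,
    smul_eq_mul, Finset.mul_sum, mul_left_comm]

section Schmidt

variable {d : ℕ} {q : Fin d → ℝ} {a b e f : Fin d → Fin d → ℂ}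

lemma norm_star_mePhi_dotProduct_le (hq : ∀ j, 0 ≤ q j) (ha : IsONB a) (hb : IsONB b)
    (he : IsONB e) (hf : IsONB f) :
    ‖star (mePhi d a b) ⬝ᵥ (fun x => ∑ j, (q j : ℂ) * e j x.1 * f j x.2)‖ ≤
      (Real.sqrt d)⁻¹ * ∑ j, q j := by
  rw [star_mePhi_dotProduct, norm_mul, Complex.norm_real, Real.norm_of_nonneg (by positivity)]
  gcongr
  refine (norm_sum_le _ _).trans (Finset.sum_le_sum fun j _ => ?_)
  rw [norm_mul, Complex.norm_real, Real.norm_of_nonneg (hq j)]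
  exact mul_le_of_le_one_right (hq j) <| ha.norm_sum_dotProduct_mul_dotProduct_le_one hb
    (he.sum_norm_sq j) (hf.sum_norm_sq j)

lemma star_mePhi_self_dotProduct (he : IsONB e) (hf : IsONB f) :
    star (mePhi d e f) ⬝ᵥ (fun x => ∑ j, (q j : ℂ) * e j x.1 * f j x.2) =
      (((Real.sqrt d)⁻¹ * ∑ j, q j : ℝ) : ℂ) := by
  simp [star_mePhi_dotProduct, he.sum_dotProduct_mul_dotProduct_self hf]

end Schmidt

theorem stmt11_general {d : ℕ}
    (q : Fin d → ℝ) (hq : ∀ i, 0 ≤ q i)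
    (e f : Fin d → (Fin d → ℂ)) (he : IsONB e) (hf : IsONB f)
    (ψ : Fin d × Fin d → ℂ)
    (hψ : ∀ x, ψ x = ∑ i, (q i : ℂ) * e i x.1 * f i x.2) :
    (sSup {r : ℝ | ∃ a b : Fin d → (Fin d → ℂ), IsONB a ∧ IsONB b ∧
        r = ‖star (mePhi d a b) ⬝ᵥ ψ‖ ^ 2}
      = (d : ℝ)⁻¹ * (∑ i, q i) ^ 2) ∧
    (1 - sSup {r : ℝ | ∃ a b : Fin d → (Fin d → ℂ), IsONB a ∧ IsONB b ∧
        r = ‖star (mePhi d a b) ⬝ᵥ ψ‖ ^ 2}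
      = 1 - (d : ℝ)⁻¹ * (∑ i, q i) ^ 2) := by
  obtain rfl : ψ = _ := funext hψ
  have hsq : ((Real.sqrt d)⁻¹ * ∑ i, q i) ^ 2 = (d : ℝ)⁻¹ * (∑ i, q i) ^ 2 := by
    rw [mul_pow, inv_pow, Real.sq_sqrt d.cast_nonneg]
  have hgreatest : IsGreatest {r : ℝ | ∃ a b : Fin d → (Fin d → ℂ), IsONB a ∧ IsONB b ∧
      r = ‖star (mePhi d a b) ⬝ᵥ (fun x => ∑ i, (q i : ℂ) * e i x.1 * f i x.2)‖ ^ 2}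
      ((d : ℝ)⁻¹ * (∑ i, q i) ^ 2) := by
    refine ⟨⟨e, f, he, hf, ?_⟩, ?_⟩
    · rw [star_mePhi_self_dotProduct he hf, Complex.norm_real, Real.norm_eq_abs, sq_abs, hsq]
    · rintro r ⟨a, b, ha, hb, rfl⟩
      rw [← hsq]
      exact pow_le_pow_left₀ (norm_nonneg _) (norm_star_mePhi_dotProduct_le hq ha hb he hf) 2
  rw [hgreatest.csSup_eq]
  exact ⟨rfl, rfl⟩

theorem stmt11 {d : ℕ} (hd : 0 < d)
    (q : Fin d → ℝ) (hq : ∀ i, 0 ≤ q i) (hq2 : ∑ i, (q i) ^ 2 = 1)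
    (e f : Fin d → (Fin d → ℂ)) (he : IsONB e) (hf : IsONB f)
    (ψ : Fin d × Fin d → ℂ)
    (hψ : ∀ x, ψ x = ∑ i, (q i : ℂ) * e i x.1 * f i x.2) :
    (sSup {r : ℝ | ∃ a b : Fin d → (Fin d → ℂ), IsONB a ∧ IsONB b ∧
        r = ‖star (mePhi d a b) ⬝ᵥ ψ‖ ^ 2}
      = (d : ℝ)⁻¹ * (∑ i, q i) ^ 2) ∧
    (1 - sSup {r : ℝ | ∃ a b : Fin d → (Fin d → ℂ), IsONB a ∧ IsONB b ∧
        r = ‖star (mePhi d a b) ⬝ᵥ ψ‖ ^ 2}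
      = 1 - (d : ℝ)⁻¹ * (∑ i, q i) ^ 2) :=
  stmt11_general q hq e f he hf ψ hψ
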